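/- arXiv:1209.3505 — 3 statements merged into one kernel-verified Lean document; each statement's English description precedes it below -/
import Mathlib

section
/- Let α > 2 and let θ_p, θ_s, P_p, p_t, μ_p, μ_s be positive reals and λ_p ≥ 0, with θ_p^{−2/α}·μ_p − λ_p > 0. Define f₁(P_s) = (1/p_t)·(θ_p^{−2/α}·μ_p − λ_p)·(P_s/P_p)^{−2/α} and f₂(P_s) = (1/p_t)·(θ_s^{−2/α}·μ_s − λ_p·(P_s/P_p)^{−2/α}) for P_s > 0. Then the unique P_s > 0 with f₁(P_s) = f₂(P_s) is P_s* = (θ_s/θ_p)·(μ_s/μ_p)^{−α/2}·P_p, and the common value is f₁(P_s*) = f₂(P_s*) = μ_s·(μ_p − θ_p^{2/α}·λ_p) / (p_t·θ_s^{2/α}·μ_p). -/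
/-!
Write `x = P_s / P_p` and `y = x^{-2/α}`. Both bounds are affine in `y`, and the `λ_p y` terms
cancel, so `f₁ = f₂` reduces to `θ_p^{-2/α} μ_p y = θ_s^{-2/α} μ_s`. This pins down `y`, and
since `x ↦ x^{-2/α}` is injective on `x > 0` it pins down `x`; evaluating at the claimed `x`
gives the common value.
-/

open Real

lemma mul_rpow_neg_inv_rpow_neg {u v e : ℝ} (hu : 0 ≤ u) (hv : 0 ≤ v) (he : e ≠ 0) :
    (u * v ^ (-e⁻¹)) ^ (-e) = u ^ (-e) * v := by
  rw [mul_rpow hu (rpow_nonneg hv _), ← rpow_mul hv, neg_mul_neg, inv_mul_cancel₀ he, rpow_one]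

lemma one_div_mul_sub_mul_eq_one_div_mul_sub_iff {c a b l y : ℝ} (hc : c ≠ 0) :
    1 / c * (a - l) * y = 1 / c * (b - l * y) ↔ a * y = b := by
  rw [mul_assoc, mul_right_inj' (one_div_ne_zero hc)]
  constructor <;> intro h <;> linarith

theorem stmt5_general (α θp θs Pp pt lp μp μs : ℝ) (hα : 2 < α) (hθp : 0 < θp)
    (hθs : 0 < θs) (hPp : 0 < Pp) (hpt : 0 < pt) (hμp : 0 < μp) (hμs : 0 < μs) :
    (0 < (θs / θp) * (μs / μp) ^ (-(α / 2)) * Pp) ∧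
    (1 / pt) * (θp ^ (-(2 / α)) * μp - lp) *
        (((θs / θp) * (μs / μp) ^ (-(α / 2)) * Pp) / Pp) ^ (-(2 / α)) =
      μs * (μp - θp ^ (2 / α) * lp) / (pt * θs ^ (2 / α) * μp) ∧
    (1 / pt) * (θs ^ (-(2 / α)) * μs -
        lp * (((θs / θp) * (μs / μp) ^ (-(α / 2)) * Pp) / Pp) ^ (-(2 / α))) =
      μs * (μp - θp ^ (2 / α) * lp) / (pt * θs ^ (2 / α) * μp) ∧
    ∀ Ps : ℝ, 0 < Ps →
      (1 / pt) * (θp ^ (-(2 / α)) * μp - lp) * (Ps / Pp) ^ (-(2 / α)) =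
        (1 / pt) * (θs ^ (-(2 / α)) * μs - lp * (Ps / Pp) ^ (-(2 / α))) →
      Ps = (θs / θp) * (μs / μp) ^ (-(α / 2)) * Pp := by
  set x := (θs / θp) * (μs / μp) ^ (-(α / 2))
  have hx : 0 < x := by positivity
  have hx_div : x * Pp / Pp = x := mul_div_cancel_right₀ x hPp.ne'
  have hα' : 2 / α ≠ 0 := div_ne_zero two_ne_zero (by linarith)
  have hx_rpow : x ^ (-(2 / α)) = θs ^ (-(2 / α)) * μs / (θp ^ (-(2 / α)) * μp) := by
    rw [show x = θs / θp * (μs / μp) ^ (-(2 / α)⁻¹) by rw [inv_div],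
      mul_rpow_neg_inv_rpow_neg (by positivity) (by positivity) hα',
      div_rpow hθs.le hθp.le]
    ring
  have hθp_pos : 0 < θp ^ (2 / α) := by positivity
  have hθs_pos : 0 < θs ^ (2 / α) := by positivity
  refine ⟨mul_pos hx hPp, ?_, ?_, fun Ps hPs hcross ↦ ?_⟩
  · rw [hx_div, hx_rpow, rpow_neg hθp.le, rpow_neg hθs.le]
    field_simp
  · rw [hx_div, hx_rpow, rpow_neg hθp.le, rpow_neg hθs.le]
    field_simp
  · have hy : (Ps / Pp) ^ (-(2 / α)) = x ^ (-(2 / α)) := by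
      rw [hx_rpow, eq_div_iff (by positivity), mul_comm]
      exact (one_div_mul_sub_mul_eq_one_div_mul_sub_iff hpt.ne').1 hcross
    have hx_div_eq : Ps / Pp = x :=
      rpow_left_injOn (neg_ne_zero.2 hα') (div_pos hPs hPp).le hx.le hy
    exact (div_eq_iff hPp.ne').1 hx_div_eq

/-- The unique positive `P_s` with `f₁(P_s) = f₂(P_s)` is
`P_s* = (θ_s/θ_p)(μ_s/μ_p)^{-α/2} P_p`, and the common value is
`μ_s(μ_p - θ_p^{2/α} l_p)/(p_t θ_s^{2/α} μ_p)`. -/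
theorem stmt5 (α θp θs Pp pt lp μp μs : ℝ) (hα : 2 < α) (hθp : 0 < θp)
    (hθs : 0 < θs) (hPp : 0 < Pp) (hpt : 0 < pt) (hμp : 0 < μp) (hμs : 0 < μs)
    (hlp : 0 ≤ lp) (h : 0 < θp ^ (-(2 / α)) * μp - lp) :
    (0 < (θs / θp) * (μs / μp) ^ (-(α / 2)) * Pp) ∧
    (1 / pt) * (θp ^ (-(2 / α)) * μp - lp) *
        (((θs / θp) * (μs / μp) ^ (-(α / 2)) * Pp) / Pp) ^ (-(2 / α)) =
      μs * (μp - θp ^ (2 / α) * lp) / (pt * θs ^ (2 / α) * μp) ∧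
    (1 / pt) * (θs ^ (-(2 / α)) * μs -
        lp * (((θs / θp) * (μs / μp) ^ (-(α / 2)) * Pp) / Pp) ^ (-(2 / α))) =
      μs * (μp - θp ^ (2 / α) * lp) / (pt * θs ^ (2 / α) * μp) ∧
    ∀ Ps : ℝ, 0 < Ps →
      (1 / pt) * (θp ^ (-(2 / α)) * μp - lp) * (Ps / Pp) ^ (-(2 / α)) =
        (1 / pt) * (θs ^ (-(2 / α)) * μs - lp * (Ps / Pp) ^ (-(2 / α))) →
      Ps = (θs / θp) * (μs / μp) ^ (-(α / 2)) * Pp :=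
  stmt5_general α θp θs Pp pt lp μp μs hα hθp hθs hPp hpt hμp hμs
end

section
/- Let α > 2 and let θ_p, θ_s, P_p, p_t, μ_p, μ_s, η, r_h, λ_p be reals with θ_p, θ_s, P_p, p_t, μ_p, μ_s, r_h > 0, 0 < η ≤ 1, λ_p ≥ 0, θ_p^{−2/α}·μ_p − λ_p > 0, and θ_s^{−2/α}·μ_s − η^{−2/α}·r_h²·λ_p > 0. Suppose η·r_h^{−α} < (θ_s/θ_p)·(μ_s/μ_p)^{−α/2}. Consider the feasible set S of pairs (P_s, λ_s) with 0 < P_s ≤ η·P_p·r_h^{−α}, λ_s ≥ 0, θ_p^{2/α}·(p_t·λ_s·(P_s/P_p)^{2/α} + λ_p) ≤ μ_p, and θ_s^{2/α}·(p_t·λ_s + λ_p·(P_s/P_p)^{−2/α}) ≤ μ_s. Then the maximum of the objective p_t·λ_s·log₂(1+θ_s) over S equals (θ_s^{−2/α}·μ_s − η^{−2/α}·r_h²·λ_p)·log₂(1+θ_s), and it is attained at P_s* = η·P_p·r_h^{−α} and λ_s* = (1/p_t)·(θ_s^{−2/α}·μ_s − η^{−2/α}·r_h²·λ_p). -/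
/-!
With `x = P_s / P_p ≤ K = η r_h^{-α}` and `a = 2/α`, the secondary outage constraint alone gives
`p_t λ_s ≤ θ_s^{-a} μ_s - λ_p x^{-a} ≤ θ_s^{-a} μ_s - λ_p K^{-a}`, because `x ↦ x^{-a}` is
decreasing; and `K^{-a} = η^{-a} r_h²`. At `x = K` with equality in this bound the primary
constraint becomes `θ_s^{-a} μ_s K^a ≤ θ_p^{-a} μ_p`, which is the case condition raised to the
power `a`.
-/

open Real

lemma rpow_mul_rpow_neg_self {x : ℝ} (hx : 0 < x) (a : ℝ) : x ^ a * x ^ (-a) = 1 := by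
  rw [← rpow_add hx, add_neg_cancel, rpow_zero]

lemma rpow_mul_le_iff_le_rpow_neg_mul {θ : ℝ} (hθ : 0 < θ) (a y μ : ℝ) :
    θ ^ a * y ≤ μ ↔ y ≤ θ ^ (-a) * μ := by
  rw [rpow_neg hθ.le, ← div_eq_inv_mul, le_div_iff₀' (rpow_pos_of_pos hθ a)]

lemma rpow_neg_rpow_neg_two_div {r : ℝ} (hr : 0 ≤ r) {α : ℝ} (hα : α ≠ 0) :
    (r ^ (-α)) ^ (-(2 / α)) = r ^ 2 := by
  rw [← rpow_mul hr, neg_mul_neg, mul_div_cancel₀ _ hα, rpow_two]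

lemma le_sub_of_secondary_outage_le {a θs μs lp x K t : ℝ} (ha : 0 ≤ a) (hθs : 0 < θs)
    (hlp : 0 ≤ lp) (hx : 0 < x) (hxK : x ≤ K) (h : θs ^ a * (t + lp * x ^ (-a)) ≤ μs) :
    t ≤ θs ^ (-a) * μs - K ^ (-a) * lp := by
  have hpow : K ^ (-a) ≤ x ^ (-a) := rpow_le_rpow_of_nonpos hx hxK (neg_nonpos.mpr ha)
  rw [rpow_mul_le_iff_le_rpow_neg_mul hθs] at h
  nlinarith

lemma primary_outage_le_at_secondary_optimum {a θp θs μp μs lp K : ℝ} (hθp : 0 < θp) (hK : 0 < K)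
    (h : θs ^ (-a) * μs * K ^ a ≤ θp ^ (-a) * μp) :
    θp ^ a * ((θs ^ (-a) * μs - K ^ (-a) * lp) * K ^ a + lp) ≤ μp := by
  rw [rpow_mul_le_iff_le_rpow_neg_mul hθp]
  linear_combination h - lp * rpow_mul_rpow_neg_self hK a

lemma rpow_neg_mul_mul_rpow_lt_of_lt {α θp θs μp μs K : ℝ} (hα : 0 < α) (hθp : 0 < θp)
    (hθs : 0 < θs) (hμp : 0 < μp) (hμs : 0 < μs) (hK : 0 < K)
    (h : K < θs / θp * (μs / μp) ^ (-(α / 2))) :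
    θs ^ (-(2 / α)) * μs * K ^ (2 / α) < θp ^ (-(2 / α)) * μp := by
  have hpow := rpow_lt_rpow hK.le h (by positivity : 0 < 2 / α)
  rw [mul_rpow (by positivity) (by positivity), ← rpow_mul (by positivity),
    show -(α / 2) * (2 / α) = -1 by field_simp, rpow_neg_one, inv_div,
    div_rpow hθs.le hθp.le] at hpow
  calc θs ^ (-(2 / α)) * μs * K ^ (2 / α)
      < θs ^ (-(2 / α)) * μs * (θs ^ (2 / α) / θp ^ (2 / α) * (μp / μs)) := by gcongr
    _ = θp ^ (-(2 / α)) * μp := by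
      rw [rpow_neg hθs.le, rpow_neg hθp.le]
      field_simp

theorem stmt8_general (α θp θs Pp pt μp μs η rh lp : ℝ)
    (hα : 2 < α) (hθp : 0 < θp) (hθs : 0 < θs) (hPp : 0 < Pp) (hpt : 0 < pt)
    (hμp : 0 < μp) (hμs : 0 < μs) (hrh : 0 < rh) (hη0 : 0 < η)
    (hlp : 0 ≤ lp)
    (h2 : 0 < θs ^ (-(2 / α)) * μs - η ^ (-(2 / α)) * rh ^ 2 * lp)
    (hcase : η * rh ^ (-α) < (θs / θp) * (μs / μp) ^ (-(α / 2))) :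
    IsGreatest
      {c : ℝ | ∃ Ps ls : ℝ, 0 < Ps ∧ Ps ≤ η * Pp * rh ^ (-α) ∧ 0 ≤ ls ∧
        θp ^ (2 / α) * (pt * ls * (Ps / Pp) ^ (2 / α) + lp) ≤ μp ∧
        θs ^ (2 / α) * (pt * ls + lp * (Ps / Pp) ^ (-(2 / α))) ≤ μs ∧
        c = pt * ls * Real.logb 2 (1 + θs)}
      ((θs ^ (-(2 / α)) * μs - η ^ (-(2 / α)) * rh ^ 2 * lp) * Real.logb 2 (1 + θs)) ∧
    (0 < η * Pp * rh ^ (-α) ∧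
      η * Pp * rh ^ (-α) ≤ η * Pp * rh ^ (-α) ∧
      0 ≤ (1 / pt) * (θs ^ (-(2 / α)) * μs - η ^ (-(2 / α)) * rh ^ 2 * lp) ∧
      θp ^ (2 / α) * (pt * ((1 / pt) * (θs ^ (-(2 / α)) * μs - η ^ (-(2 / α)) * rh ^ 2 * lp)) *
          ((η * Pp * rh ^ (-α)) / Pp) ^ (2 / α) + lp) ≤ μp ∧
      θs ^ (2 / α) * (pt * ((1 / pt) * (θs ^ (-(2 / α)) * μs - η ^ (-(2 / α)) * rh ^ 2 * lp)) +
          lp * ((η * Pp * rh ^ (-α)) / Pp) ^ (-(2 / α))) ≤ μs ∧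
      pt * ((1 / pt) * (θs ^ (-(2 / α)) * μs - η ^ (-(2 / α)) * rh ^ 2 * lp)) *
          Real.logb 2 (1 + θs) =
        (θs ^ (-(2 / α)) * μs - η ^ (-(2 / α)) * rh ^ 2 * lp) * Real.logb 2 (1 + θs)) := by
  have ha : 0 < 2 / α := by positivity
  have hK : 0 < η * rh ^ (-α) := by positivity
  have hratio : η * Pp * rh ^ (-α) / Pp = η * rh ^ (-α) := by field_simp
  have hKa : (η * rh ^ (-α)) ^ (-(2 / α)) = η ^ (-(2 / α)) * rh ^ 2 := by
    rw [mul_rpow hη0.le (by positivity), rpow_neg_rpow_neg_two_div hrh.le (by positivity)]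
  have hls : pt * ((1 / pt) * (θs ^ (-(2 / α)) * μs - η ^ (-(2 / α)) * rh ^ 2 * lp))
      = θs ^ (-(2 / α)) * μs - η ^ (-(2 / α)) * rh ^ 2 * lp := by
    field_simp
  refine ⟨⟨⟨η * Pp * rh ^ (-α),
    (1 / pt) * (θs ^ (-(2 / α)) * μs - η ^ (-(2 / α)) * rh ^ 2 * lp),
    ?pos, le_rfl, ?nonneg, ?primary, ?secondary, by rw [hls]⟩, ?_⟩,
    ?pos, le_rfl, ?nonneg, ?primary, ?secondary, by rw [hls]⟩
  case pos => positivity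
  case nonneg => positivity
  case primary =>
    rw [hls, hratio, ← hKa]
    exact primary_outage_le_at_secondary_optimum hθp hK
      (rpow_neg_mul_mul_rpow_lt_of_lt (by linarith) hθp hθs hμp hμs hK hcase).le
  case secondary =>
    rw [hls, hratio, hKa, mul_comm lp, sub_add_cancel, rpow_mul_le_iff_le_rpow_neg_mul hθs]
  rintro c ⟨Ps, ls, hPs, hPsle, -, -, hsec, rfl⟩
  have hx : Ps / Pp ≤ η * rh ^ (-α) := by rwa [div_le_iff₀ hPp, mul_right_comm]
  have hbound := le_sub_of_secondary_outage_le ha.le hθs hlp (div_pos hPs hPp) hx hsec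
  rw [hKa] at hbound
  gcongr
  exact logb_nonneg one_lt_two (by linarith)

/-- Case 1 of Proposition 2: if `η r_h^{-α} < (θ_s/θ_p)(μ_s/μ_p)^{-α/2}`, the maximum
secondary throughput over the feasible set is
`(θ_s^{-2/α} μ_s - η^{-2/α} r_h² l_p) log₂(1+θ_s)`, attained at
`P_s* = η P_p r_h^{-α}` and `l_s* = (1/p_t)(θ_s^{-2/α} μ_s - η^{-2/α} r_h² l_p)`. -/
theorem stmt8 (α θp θs Pp pt μp μs η rh lp : ℝ)
    (hα : 2 < α) (hθp : 0 < θp) (hθs : 0 < θs) (hPp : 0 < Pp) (hpt : 0 < pt)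
    (hμp : 0 < μp) (hμs : 0 < μs) (hrh : 0 < rh) (hη0 : 0 < η) (hη1 : η ≤ 1)
    (hlp : 0 ≤ lp)
    (h1 : 0 < θp ^ (-(2 / α)) * μp - lp)
    (h2 : 0 < θs ^ (-(2 / α)) * μs - η ^ (-(2 / α)) * rh ^ 2 * lp)
    (hcase : η * rh ^ (-α) < (θs / θp) * (μs / μp) ^ (-(α / 2))) :
    IsGreatest
      {c : ℝ | ∃ Ps ls : ℝ, 0 < Ps ∧ Ps ≤ η * Pp * rh ^ (-α) ∧ 0 ≤ ls ∧
        θp ^ (2 / α) * (pt * ls * (Ps / Pp) ^ (2 / α) + lp) ≤ μp ∧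
        θs ^ (2 / α) * (pt * ls + lp * (Ps / Pp) ^ (-(2 / α))) ≤ μs ∧
        c = pt * ls * Real.logb 2 (1 + θs)}
      ((θs ^ (-(2 / α)) * μs - η ^ (-(2 / α)) * rh ^ 2 * lp) * Real.logb 2 (1 + θs)) ∧
    (0 < η * Pp * rh ^ (-α) ∧
      η * Pp * rh ^ (-α) ≤ η * Pp * rh ^ (-α) ∧
      0 ≤ (1 / pt) * (θs ^ (-(2 / α)) * μs - η ^ (-(2 / α)) * rh ^ 2 * lp) ∧
      θp ^ (2 / α) * (pt * ((1 / pt) * (θs ^ (-(2 / α)) * μs - η ^ (-(2 / α)) * rh ^ 2 * lp)) *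
          ((η * Pp * rh ^ (-α)) / Pp) ^ (2 / α) + lp) ≤ μp ∧
      θs ^ (2 / α) * (pt * ((1 / pt) * (θs ^ (-(2 / α)) * μs - η ^ (-(2 / α)) * rh ^ 2 * lp)) +
          lp * ((η * Pp * rh ^ (-α)) / Pp) ^ (-(2 / α))) ≤ μs ∧
      pt * ((1 / pt) * (θs ^ (-(2 / α)) * μs - η ^ (-(2 / α)) * rh ^ 2 * lp)) *
          Real.logb 2 (1 + θs) =
        (θs ^ (-(2 / α)) * μs - η ^ (-(2 / α)) * rh ^ 2 * lp) * Real.logb 2 (1 + θs)) :=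
  stmt8_general α θp θs Pp pt μp μs η rh lp hα hθp hθs hPp hpt hμp hμs hrh hη0 hlp h2 hcase
end

section
/- Let α > 2 and let θ_p, θ_s, P_p, p_t, μ_p, μ_s, η, r_h, λ_p be reals with θ_p, θ_s, P_p, p_t, μ_p, μ_s, r_h > 0, 0 < η ≤ 1, λ_p ≥ 0, and θ_p^{−2/α}·μ_p − λ_p > 0. Suppose η·r_h^{−α} ≥ (θ_s/θ_p)·(μ_s/μ_p)^{−α/2}. Consider the feasible set S of pairs (P_s, λ_s) with 0 < P_s ≤ η·P_p·r_h^{−α}, λ_s ≥ 0, θ_p^{2/α}·(p_t·λ_s·(P_s/P_p)^{2/α} + λ_p) ≤ μ_p, and θ_s^{2/α}·(p_t·λ_s + λ_p·(P_s/P_p)^{−2/α}) ≤ μ_s. Then the maximum of the objective p_t·λ_s·log₂(1+θ_s) over S equals (θ_s^{−2/α}·μ_s − (θ_s/θ_p)^{−2/α}·(μ_s/μ_p)·λ_p)·log₂(1+θ_s), and it is attained at P_s* = (θ_s/θ_p)·(μ_s/μ_p)^{−α/2}·P_p and λ_s* = (1/p_t)·(θ_s^{−2/α}·μ_s − (θ_s/θ_p)^{−2/α}·(μ_s/μ_p)·λ_p).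 -/
/-!
Write `x = (P_s/P_p)^{2/α}` and `s = p_t λ_s`. The primary constraint bounds `s` by a
decreasing function of `x` and the secondary constraint by an increasing one, so `s` is
largest at the power where the two bounds cross, i.e. where both constraints are tight;
in case 2 that power lies below the recharge limit, so it is feasible.
-/

open Real

/-- Two bounds on `s`, one decreasing and one increasing in `x > 0`, crossing at `x₀`,
force `s` below their common value there. -/
theorem mul_le_of_mul_le_of_add_div_le {s x x₀ A B c : ℝ} (hs : 0 ≤ s) (hx : 0 < x)
    (hc : 0 ≤ c) (h₁ : s * x ≤ A) (h₂ : s + c / x ≤ B) (hcross : A = B * x₀ - c) :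
    s * x₀ ≤ A := by
  rcases le_or_gt x₀ x with hle | hlt
  · exact (mul_le_mul_of_nonneg_left hle hs).trans h₁
  · have hx₀ : 0 < x₀ := hx.trans hlt
    have : s ≤ B - c / x₀ := by
      linarith [div_le_div_of_nonneg_left hc hx hlt.le]
    calc s * x₀ ≤ (B - c / x₀) * x₀ := mul_le_mul_of_nonneg_right this hx₀.le
      _ = A := by rw [hcross]; field_simp

theorem div_mul_div_rpow_neg_half_rpow_two_div {a b c d α : ℝ} (ha : 0 ≤ a) (hb : 0 ≤ b)
    (hc : 0 < c) (hd : 0 < d) (hα : α ≠ 0) :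
    (a / b * (c / d) ^ (-(α / 2))) ^ (2 / α) = a ^ (2 / α) * d / (b ^ (2 / α) * c) := by
  have hexp : -(α / 2) * (2 / α) = -1 := by field_simp
  rw [mul_rpow (by positivity) (by positivity), ← rpow_mul (by positivity), hexp, rpow_neg_one,
    div_rpow ha hb, inv_div]
  ring

section ReducedProblem

variable {Y Z μp μs lp : ℝ}

theorem load_le_of_outage_constraints (hY : 0 < Y) (hZ : 0 < Z) (hμp : 0 < μp) (hμs : 0 < μs)
    (hlp : 0 ≤ lp) {s x : ℝ} (hs : 0 ≤ s) (hx : 0 < x)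
    (hp : Y * (s * x + lp) ≤ μp) (hsec : Z * (s + lp / x) ≤ μs) :
    s ≤ Z⁻¹ * μs - Y / Z * (μs / μp) * lp := by
  have hx₀ : 0 < Z * μp / (Y * μs) := by positivity
  have h₁ : s * x ≤ μp / Y - lp := by
    rw [le_sub_iff_add_le, le_div_iff₀ hY]; linarith
  have h₂ : s + lp / x ≤ μs / Z := by rw [le_div_iff₀ hZ]; linarith
  have hcross := mul_le_of_mul_le_of_add_div_le hs hx hlp h₁ h₂
    (x₀ := Z * μp / (Y * μs)) (by field_simp)
  calc s ≤ (μp / Y - lp) / (Z * μp / (Y * μs)) := (le_div_iff₀ hx₀).2 hcross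
    _ = Z⁻¹ * μs - Y / Z * (μs / μp) * lp := by field_simp

theorem optimal_load_nonneg (hY : 0 < Y) (hZ : 0 < Z) (hμp : 0 < μp) (hμs : 0 < μs)
    (h : 0 ≤ Y⁻¹ * μp - lp) : 0 ≤ Z⁻¹ * μs - Y / Z * (μs / μp) * lp := by
  have hM : Z⁻¹ * μs - Y / Z * (μs / μp) * lp = Y * μs / (Z * μp) * (Y⁻¹ * μp - lp) := by
    field_simp
  rw [hM]
  positivity

theorem primary_eq_at_optimum (hY : Y ≠ 0) (hZ : Z ≠ 0) (hμp : μp ≠ 0) (hμs : μs ≠ 0) :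
    Y * ((Z⁻¹ * μs - Y / Z * (μs / μp) * lp) * (Z * μp / (Y * μs)) + lp) = μp := by
  field_simp
  ring

theorem secondary_eq_at_optimum (hZ : Z ≠ 0) (hμp : μp ≠ 0) (hμs : μs ≠ 0) :
    Z * ((Z⁻¹ * μs - Y / Z * (μs / μp) * lp) + lp * (Y * μs / (Z * μp))) = μs := by
  field_simp
  ring

end ReducedProblem

theorem stmt9_general (α θp θs Pp pt μp μs η rh lp : ℝ)
    (hα : 2 < α) (hθp : 0 < θp) (hθs : 0 < θs) (hPp : 0 < Pp) (hpt : 0 < pt)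
    (hμp : 0 < μp) (hμs : 0 < μs) (hlp : 0 ≤ lp)
    (h1 : 0 < θp ^ (-(2 / α)) * μp - lp)
    (hcase : (θs / θp) * (μs / μp) ^ (-(α / 2)) ≤ η * rh ^ (-α)) :
    IsGreatest
      {c : ℝ | ∃ Ps ls : ℝ, 0 < Ps ∧ Ps ≤ η * Pp * rh ^ (-α) ∧ 0 ≤ ls ∧
        θp ^ (2 / α) * (pt * ls * (Ps / Pp) ^ (2 / α) + lp) ≤ μp ∧
        θs ^ (2 / α) * (pt * ls + lp * (Ps / Pp) ^ (-(2 / α))) ≤ μs ∧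
        c = pt * ls * Real.logb 2 (1 + θs)}
      ((θs ^ (-(2 / α)) * μs - (θs / θp) ^ (-(2 / α)) * (μs / μp) * lp) *
        Real.logb 2 (1 + θs)) ∧
    (0 < (θs / θp) * (μs / μp) ^ (-(α / 2)) * Pp ∧
      (θs / θp) * (μs / μp) ^ (-(α / 2)) * Pp ≤ η * Pp * rh ^ (-α) ∧
      0 ≤ (1 / pt) * (θs ^ (-(2 / α)) * μs - (θs / θp) ^ (-(2 / α)) * (μs / μp) * lp) ∧
      θp ^ (2 / α) * (pt * ((1 / pt) * (θs ^ (-(2 / α)) * μs -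
            (θs / θp) ^ (-(2 / α)) * (μs / μp) * lp)) *
          (((θs / θp) * (μs / μp) ^ (-(α / 2)) * Pp) / Pp) ^ (2 / α) + lp) ≤ μp ∧
      θs ^ (2 / α) * (pt * ((1 / pt) * (θs ^ (-(2 / α)) * μs -
            (θs / θp) ^ (-(2 / α)) * (μs / μp) * lp)) +
          lp * (((θs / θp) * (μs / μp) ^ (-(α / 2)) * Pp) / Pp) ^ (-(2 / α))) ≤ μs ∧
      pt * ((1 / pt) * (θs ^ (-(2 / α)) * μs - (θs / θp) ^ (-(2 / α)) * (μs / μp) * lp)) *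
          Real.logb 2 (1 + θs) =
        (θs ^ (-(2 / α)) * μs - (θs / θp) ^ (-(2 / α)) * (μs / μp) * lp) *
          Real.logb 2 (1 + θs)) := by
  have hratio : 0 ≤ θs / θp * (μs / μp) ^ (-(α / 2)) := by positivity
  rw [rpow_neg hθp.le] at h1
  rw [rpow_neg hθs.le, rpow_neg (div_nonneg hθs.le hθp.le), div_rpow hθs.le hθp.le, inv_div]
  set Y := θp ^ (2 / α)
  set Z := θs ^ (2 / α)
  have hY : 0 < Y := rpow_pos_of_pos hθp _
  have hZ : 0 < Z := rpow_pos_of_pos hθs _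
  have hlog : 0 ≤ logb 2 (1 + θs) := logb_nonneg one_lt_two (by linarith)
  -- the attainment conjunct is verbatim the membership of the value in the feasible set
  refine (fun hopt => ⟨⟨⟨_, _, hopt.1, hopt.2.1, hopt.2.2.1, hopt.2.2.2.1, hopt.2.2.2.2.1,
    hopt.2.2.2.2.2.symm⟩, ?_⟩, hopt⟩) ?_
  · rw [mul_div_cancel_right₀ _ hPp.ne', rpow_neg hratio,
      div_mul_div_rpow_neg_half_rpow_two_div hθs.le hθp.le hμs hμp (zero_lt_two.trans hα).ne', inv_div,
      one_div, mul_inv_cancel_left₀ hpt.ne']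
    refine ⟨by positivity, ?_, mul_nonneg (by positivity)
      (optimal_load_nonneg hY hZ hμp hμs h1.le),
      (primary_eq_at_optimum hY.ne' hZ.ne' hμp.ne' hμs.ne').le,
      (secondary_eq_at_optimum hZ.ne' hμp.ne' hμs.ne').le, rfl⟩
    rw [mul_right_comm η]
    exact mul_le_mul_of_nonneg_right hcase hPp.le
  · rintro c ⟨Ps, ls, hPs, -, hls, hp, hsec, rfl⟩
    have hx : 0 < (Ps / Pp) ^ (2 / α) := rpow_pos_of_pos (div_pos hPs hPp) _
    rw [rpow_neg (div_nonneg hPs.le hPp.le), ← div_eq_mul_inv] at hsec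
    exact mul_le_mul_of_nonneg_right
      (load_le_of_outage_constraints hY hZ hμp hμs hlp (mul_nonneg hpt.le hls) hx hp hsec) hlog

/-- Case 2 of Proposition 2: if `η r_h^{-α} ≥ (θ_s/θ_p)(μ_s/μ_p)^{-α/2}`, the maximum
secondary throughput over the feasible set is
`(θ_s^{-2/α} μ_s - (θ_s/θ_p)^{-2/α}(μ_s/μ_p) l_p) log₂(1+θ_s)`, attained at
`P_s* = (θ_s/θ_p)(μ_s/μ_p)^{-α/2} P_p` and
`l_s* = (1/p_t)(θ_s^{-2/α} μ_s - (θ_s/θ_p)^{-2/α}(μ_s/μ_p) l_p)`. -/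
theorem stmt9 (α θp θs Pp pt μp μs η rh lp : ℝ)
    (hα : 2 < α) (hθp : 0 < θp) (hθs : 0 < θs) (hPp : 0 < Pp) (hpt : 0 < pt)
    (hμp : 0 < μp) (hμs : 0 < μs) (hrh : 0 < rh) (hη0 : 0 < η) (hη1 : η ≤ 1)
    (hlp : 0 ≤ lp)
    (h1 : 0 < θp ^ (-(2 / α)) * μp - lp)
    (hcase : (θs / θp) * (μs / μp) ^ (-(α / 2)) ≤ η * rh ^ (-α)) :
    IsGreatest
      {c : ℝ | ∃ Ps ls : ℝ, 0 < Ps ∧ Ps ≤ η * Pp * rh ^ (-α) ∧ 0 ≤ ls ∧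
        θp ^ (2 / α) * (pt * ls * (Ps / Pp) ^ (2 / α) + lp) ≤ μp ∧
        θs ^ (2 / α) * (pt * ls + lp * (Ps / Pp) ^ (-(2 / α))) ≤ μs ∧
        c = pt * ls * Real.logb 2 (1 + θs)}
      ((θs ^ (-(2 / α)) * μs - (θs / θp) ^ (-(2 / α)) * (μs / μp) * lp) *
        Real.logb 2 (1 + θs)) ∧
    (0 < (θs / θp) * (μs / μp) ^ (-(α / 2)) * Pp ∧
      (θs / θp) * (μs / μp) ^ (-(α / 2)) * Pp ≤ η * Pp * rh ^ (-α) ∧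
      0 ≤ (1 / pt) * (θs ^ (-(2 / α)) * μs - (θs / θp) ^ (-(2 / α)) * (μs / μp) * lp) ∧
      θp ^ (2 / α) * (pt * ((1 / pt) * (θs ^ (-(2 / α)) * μs -
            (θs / θp) ^ (-(2 / α)) * (μs / μp) * lp)) *
          (((θs / θp) * (μs / μp) ^ (-(α / 2)) * Pp) / Pp) ^ (2 / α) + lp) ≤ μp ∧
      θs ^ (2 / α) * (pt * ((1 / pt) * (θs ^ (-(2 / α)) * μs -
            (θs / θp) ^ (-(2 / α)) * (μs / μp) * lp)) +
          lp * (((θs / θp) * (μs / μp) ^ (-(α / 2)) * Pp) / Pp) ^ (-(2 / α))) ≤ μs ∧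
      pt * ((1 / pt) * (θs ^ (-(2 / α)) * μs - (θs / θp) ^ (-(2 / α)) * (μs / μp) * lp)) *
          Real.logb 2 (1 + θs) =
        (θs ^ (-(2 / α)) * μs - (θs / θp) ^ (-(2 / α)) * (μs / μp) * lp) *
          Real.logb 2 (1 + θs)) :=
  stmt9_general α θp θs Pp pt μp μs η rh lp hα hθp hθs hPp hpt hμp hμs hlp h1 hcase
end
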